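/- Let S ⪰ 0, λ > 0, and Ŝ symmetric with ‖(S+λI)^{-1/2}(Ŝ−S)(S+λI)^{-1/2}‖ ≤ 1/2. Then |tr(S(Ŝ+λI)^{-1}) − df_λ(S)| ≤ 3·df_λ(S), i.e., the degrees-of-freedom surrogate computed with Ŝ is at most 4·df_λ(S). -/

import Mathlib

/-!
With `R = (S + λI)^{1/2}` and `E = R⁻¹(Ŝ - S)R⁻¹` we have `Ŝ + λI = R(1 + E)R`, so
`tr(S(Ŝ+λI)⁻¹) = tr(T(1+E)⁻¹)` and `df_λ(S) = tr T` for `T = R⁻¹SR⁻¹ ⪰ 0`. As `‖E‖ ≤ 1/2`, the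
quadratic form of `1 + E` is at least `|x|²/2`, so that of `(1+E)⁻¹` lies between `0` and
`2|x|²`. Writing `T = DᵀD` turns `tr(TC)` into the sum of the quadratic forms of `C` at the rows
of `D`, whence `0 ≤ tr(S(Ŝ+λI)⁻¹) ≤ 2 df_λ(S)`.
-/

open Matrix
open scoped Matrix.Norms.L2Operator

/-- The positive semidefinite square root of a matrix (junk value `0` if the
matrix is not positive semidefinite). -/
noncomputable def msqrt {d : ℕ} (M : Matrix (Fin d) (Fin d) ℝ) :
    Matrix (Fin d) (Fin d) ℝ := by
  classical exact if h : M.PosSemidef then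
    h.1.eigenvectorUnitary.1 * diagonal ((↑) ∘ (√·) ∘ h.1.eigenvalues) *
      (star h.1.eigenvectorUnitary : Matrix (Fin d) (Fin d) ℝ) else 0

/-- The inverse square root `M^{-1/2}` of a positive semidefinite matrix. -/
noncomputable def minvSqrt {d : ℕ} (M : Matrix (Fin d) (Fin d) ℝ) :
    Matrix (Fin d) (Fin d) ℝ :=
  (msqrt M)⁻¹

/-- Loewner order: `A ⪯ B` iff `B - A` is positive semidefinite. -/
def Loewner {d : ℕ} (A B : Matrix (Fin d) (Fin d) ℝ) : Prop :=
  (B - A).PosSemidef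

/-- Degrees of freedom: `df_λ(S) = tr(S (S + λI)⁻¹)`. -/
noncomputable def df {d : ℕ} (S : Matrix (Fin d) (Fin d) ℝ) (l : ℝ) : ℝ :=
  (S * (S + l • (1 : Matrix (Fin d) (Fin d) ℝ))⁻¹).trace

open scoped MatrixOrder

section msqrt

variable {d : ℕ} {M : Matrix (Fin d) (Fin d) ℝ}

theorem msqrt_eq_cfcSqrt (h : M.PosSemidef) : msqrt M = CFC.sqrt M := by
  rw [msqrt, dif_pos h, CFC.sqrt_eq_cfc, cfc_nnreal_eq_real _ M, h.1.cfc_eq, IsHermitian.cfc]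
  simp only [Unitary.conjStarAlgAut_apply]
  congr 3 with i
  simp [h.eigenvalues_nonneg i]

theorem msqrt_mul_self (h : M.PosSemidef) : msqrt M * msqrt M = M := by
  rw [msqrt_eq_cfcSqrt h, CFC.sqrt_mul_sqrt_self M h.nonneg]

theorem isHermitian_msqrt (h : M.PosSemidef) : (msqrt M).IsHermitian := by
  rw [msqrt_eq_cfcSqrt h]
  exact (CFC.sqrt_nonneg M).posSemidef.isHermitian

theorem isUnit_det_msqrt (h : M.PosDef) : IsUnit (msqrt M).det := by
  have hdet : IsUnit ((msqrt M).det * (msqrt M).det) := by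
    rw [← det_mul, msqrt_mul_self h.posSemidef]
    exact (isUnit_iff_isUnit_det M).mp h.isUnit
  exact isUnit_of_mul_isUnit_left hdet

end msqrt

namespace Matrix

variable {n : Type*} [Fintype n]

theorem dotProduct_self_nonneg (v : n → ℝ) : 0 ≤ v ⬝ᵥ v := by
  simpa using dotProduct_self_star_nonneg v

theorem trace_conjTranspose_mul_self_mul (D C : Matrix n n ℝ) :
    (Dᴴ * D * C).trace = ∑ i, D i ⬝ᵥ C *ᵥ D i := by
  rw [Matrix.mul_assoc, trace_mul_comm]
  simp [trace, mul_mul_apply]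

variable [DecidableEq n]

theorem trace_mul_inv_conj (S R B : Matrix n n ℝ) :
    (S * (R * B * R)⁻¹).trace = (R⁻¹ * S * R⁻¹ * B⁻¹).trace := by
  rw [mul_inv_rev, mul_inv_rev, Matrix.mul_assoc (R⁻¹ * S), Matrix.mul_assoc R⁻¹,
    trace_mul_comm R⁻¹]
  simp only [Matrix.mul_assoc]

theorem abs_dotProduct_mulVec_le (E : Matrix n n ℝ) (x : n → ℝ) :
    |x ⬝ᵥ E *ᵥ x| ≤ ‖E‖ * (x ⬝ᵥ x) := by
  have hx : x ⬝ᵥ x = ‖WithLp.toLp 2 x‖ ^ 2 := by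
    rw [← real_inner_self_eq_norm_sq, EuclideanSpace.inner_toLp_toLp, star_trivial]
  calc |x ⬝ᵥ E *ᵥ x| = |inner ℝ (WithLp.toLp 2 (E *ᵥ x)) (WithLp.toLp 2 x)| := by
        rw [EuclideanSpace.inner_toLp_toLp, star_trivial]
    _ ≤ ‖WithLp.toLp 2 (E *ᵥ x)‖ * ‖WithLp.toLp 2 x‖ := abs_real_inner_le_norm _ _
    _ ≤ ‖E‖ * ‖WithLp.toLp 2 x‖ * ‖WithLp.toLp 2 x‖ := by
        gcongr; exact E.l2_opNorm_mulVec (WithLp.toLp 2 x)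
    _ = ‖E‖ * (x ⬝ᵥ x) := by rw [hx]; ring

theorem le_dotProduct_one_add_mulVec {E : Matrix n n ℝ} {c : ℝ} (hE : ‖E‖ ≤ c) (x : n → ℝ) :
    (1 - c) * (x ⬝ᵥ x) ≤ x ⬝ᵥ (1 + E) *ᵥ x := by
  have hEx := (abs_le.mp ((abs_dotProduct_mulVec_le E x).trans
    (mul_le_mul_of_nonneg_right hE (dotProduct_self_nonneg x)))).1
  rw [add_mulVec, one_mulVec, dotProduct_add]
  linarith

theorem PosSemidef.trace_mul_le_trace_mul {T C C' : Matrix n n ℝ} (hT : T.PosSemidef)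
    (h : ∀ x, x ⬝ᵥ C *ᵥ x ≤ x ⬝ᵥ C' *ᵥ x) : (T * C).trace ≤ (T * C').trace := by
  obtain ⟨D, rfl⟩ := CStarAlgebra.nonneg_iff_eq_star_mul_self.mp hT.nonneg
  simp only [star_eq_conjTranspose, trace_conjTranspose_mul_self_mul]
  exact Finset.sum_le_sum fun i _ => h (D i)

variable {B : Matrix n n ℝ} {c : ℝ}

theorem isUnit_det_of_le_dotProduct_mulVec (hc : 0 < c)
    (hB : ∀ x, c * (x ⬝ᵥ x) ≤ x ⬝ᵥ B *ᵥ x) : IsUnit B.det := by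
  rw [← isUnit_iff_isUnit_det, ← mulVec_injective_iff_isUnit]
  intro x y hxy
  have hz : B *ᵥ (x - y) = 0 := by rw [mulVec_sub, hxy, sub_self]
  have := hB (x - y)
  rw [hz, dotProduct_zero] at this
  have hzz : (x - y) ⬝ᵥ (x - y) = 0 :=
    le_antisymm (nonpos_of_mul_nonpos_right this hc) (dotProduct_self_nonneg _)
  exact sub_eq_zero.mp (dotProduct_self_eq_zero.mp hzz)

theorem dotProduct_inv_mulVec_mem_Icc (hc : 0 < c)
    (hB : ∀ x, c * (x ⬝ᵥ x) ≤ x ⬝ᵥ B *ᵥ x) (x : n → ℝ) :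
    x ⬝ᵥ B⁻¹ *ᵥ x ∈ Set.Icc 0 (c⁻¹ * (x ⬝ᵥ x)) := by
  set y := B⁻¹ *ᵥ x
  have hxy : x ⬝ᵥ y = y ⬝ᵥ B *ᵥ y := by
    rw [mulVec_mulVec, mul_nonsing_inv _ (isUnit_det_of_le_dotProduct_mulVec hc hB),
      one_mulVec, dotProduct_comm]
  have hy := hB y
  have hyy := dotProduct_self_nonneg y
  -- `0 ≤ |x - c y|² = |x|² - 2c x⬝y + c² |y|²` together with `c |y|² ≤ x⬝y`
  have hsq := dotProduct_self_nonneg (x - c • y)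
  simp only [sub_dotProduct, dotProduct_sub, smul_dotProduct, dotProduct_smul, smul_eq_mul,
    dotProduct_comm y x] at hsq
  refine ⟨by nlinarith, ?_⟩
  rw [inv_mul_eq_div, le_div_iff₀ hc]
  nlinarith

theorem PosSemidef.trace_mul_inv_mem_Icc {T : Matrix n n ℝ} (hT : T.PosSemidef) (hc : 0 < c)
    (hB : ∀ x, c * (x ⬝ᵥ x) ≤ x ⬝ᵥ B *ᵥ x) : (T * B⁻¹).trace ∈ Set.Icc 0 (c⁻¹ * T.trace) := by
  have hlow := hT.trace_mul_le_trace_mul (C := 0) (C' := B⁻¹) fun x => by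
    simpa using (dotProduct_inv_mulVec_mem_Icc hc hB x).1
  have hupp := hT.trace_mul_le_trace_mul (C := B⁻¹) (C' := c⁻¹ • 1) fun x => by
    simpa [smul_mulVec] using (dotProduct_inv_mulVec_mem_Icc hc hB x).2
  simp only [Matrix.mul_zero, trace_zero, Matrix.mul_smul, Matrix.mul_one, trace_smul,
    smul_eq_mul] at hlow hupp
  exact ⟨hlow, hupp⟩

end Matrix

theorem df_surrogate_bound_general {d : ℕ}
    (S Shat : Matrix (Fin d) (Fin d) ℝ) (l : ℝ)
    (hS : S.PosSemidef) (hl : 0 < l)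
    (herr : ‖minvSqrt (S + l • 1) * (Shat - S) * minvSqrt (S + l • 1)‖ ≤ 1 / 2) :
    |(S * (Shat + l • 1)⁻¹).trace - df S l| ≤ 3 * df S l := by
  have hA : (S + l • 1).PosDef := PosDef.posSemidef_add hS (PosDef.one.smul hl)
  set R := msqrt (S + l • 1)
  have hR : IsUnit R.det := isUnit_det_msqrt hA
  set E := R⁻¹ * (Shat - S) * R⁻¹
  have hfac : Shat + l • 1 = R * (1 + E) * R := by
    have hRER : R * E * R = Shat - S := by
      simp only [E, ← Matrix.mul_assoc, mul_nonsing_inv _ hR, Matrix.one_mul,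
        nonsing_inv_mul_cancel_right _ _ hR]
    rw [Matrix.mul_add, Matrix.add_mul, Matrix.mul_one, msqrt_mul_self hA.posSemidef, hRER]
    abel
  have hdf : df S l = (R⁻¹ * S * R⁻¹).trace := by
    have h := trace_mul_inv_conj S R 1
    rwa [Matrix.mul_one, msqrt_mul_self hA.posSemidef, inv_one, Matrix.mul_one] at h
  have hT : (R⁻¹ * S * R⁻¹).PosSemidef := by
    have h := hS.mul_mul_conjTranspose_same R⁻¹
    rwa [(isHermitian_msqrt hA.posSemidef).inv.eq] at h
  have hE : ‖E‖ ≤ 1 / 2 := herr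
  obtain ⟨hlow, hupp⟩ :=
    hT.trace_mul_inv_mem_Icc (by norm_num) (le_dotProduct_one_add_mulVec hE)
  norm_num at hupp
  rw [hfac, trace_mul_inv_conj, hdf, abs_le]
  constructor <;> linarith

/-- Stability of the degrees-of-freedom surrogate: if
`‖(S+λI)^{-1/2}(Ŝ−S)(S+λI)^{-1/2}‖ ≤ 1/2` then
`|tr(S(Ŝ+λI)⁻¹) − df_λ(S)| ≤ 3·df_λ(S)`. -/
theorem df_surrogate_bound {d : ℕ}
    (S Shat : Matrix (Fin d) (Fin d) ℝ) (l : ℝ)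
    (hS : S.PosSemidef) (hShat : Shat.IsHermitian) (hl : 0 < l)
    (herr : ‖minvSqrt (S + l • 1) * (Shat - S) * minvSqrt (S + l • 1)‖ ≤ 1 / 2) :
    |(S * (Shat + l • 1)⁻¹).trace - df S l| ≤ 3 * df S l :=
  df_surrogate_bound_general S Shat l hS hl herr
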